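/- arXiv:2509.17587 — 8 statements merged into one kernel-verified Lean document; each statement's English description precedes it below -/
import Mathlib

section
/- Let G be a finite group with exactly one noncommutator t. Then t has order at most 2, i.e., t^2 = 1. -/
/-- If a finite group `G` has exactly one noncommutator `t`, then `t ^ 2 = 1`. -/
theorem stmt_0 {G : Type*} [Group G] [Finite G] (t : G)
    (ht : ∀ x : G, (¬ ∃ a b : G, x = a⁻¹ * b⁻¹ * a * b) ↔ x = t) :
    t ^ 2 = 1 := by
  have hinv : t⁻¹ = t := by
    apply (ht t⁻¹).mp
    rintro ⟨a, b, hab⟩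
    exact (ht t).mpr rfl ⟨b, a, by rw [← inv_inv t, hab]; group⟩
  calc t ^ 2 = t * t := sq t
    _ = t * t⁻¹ := by rw [hinv]
    _ = 1 := mul_inv_cancel t
end

section
/- Let G be a finite group with exactly one noncommutator t. Then t lies in the center Z(G) of G, i.e., t commutes with every element of G. -/
/-- If a finite group `G` has exactly one noncommutator `t`, then `t` is central. -/
theorem stmt_1 {G : Type*} [Group G] [Finite G] (t : G)
    (ht : ∀ x : G, (¬ ∃ a b : G, x = a⁻¹ * b⁻¹ * a * b) ↔ x = t) :
    ∀ g : G, t * g = g * t := by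
  intro g
  have h1 : ¬ ∃ a b : G, t = a⁻¹ * b⁻¹ * a * b := (ht t).mpr rfl
  have h2 : ¬ ∃ a b : G, g⁻¹ * t * g = a⁻¹ * b⁻¹ * a * b := by
    rintro ⟨a, b, hab⟩
    refine h1 ⟨g * a * g⁻¹, g * b * g⁻¹, ?_⟩
    have : t = g * (g⁻¹ * t * g) * g⁻¹ := by group
    rw [this, hab]; group
  have h3 : g⁻¹ * t * g = t := (ht _).mp h2
  calc t * g = g * (g⁻¹ * t * g) := by group
    _ = g * t := by rw [h3]
end

section
/- Let G be a finite nonabelian group with exactly one noncommutator t, let T be the normal subgroup of G × G generated by the element (t, t), and let K = (G × G)/T. Then the coset (t, 1)T is not a commutator in K. -/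
/-- If `G` is a finite nonabelian group with exactly one noncommutator `t`,
`T` is the normal closure of `{(t, t)}` in `G × G` and `K = (G × G)/T`, then
the coset `(t, 1)T` is not a commutator in `K`. -/
theorem stmt_6 {G : Type*} [Group G] [Finite G] (hna : ¬ ∀ a b : G, a * b = b * a) (t : G)
    (ht : ∀ x : G, (¬ ∃ a b : G, x = a⁻¹ * b⁻¹ * a * b) ↔ x = t) :
    ¬ ∃ a b : (G × G) ⧸ Subgroup.normalClosure {((t, t) : G × G)},
      (QuotientGroup.mk ((t, 1) : G × G) : (G × G) ⧸ Subgroup.normalClosure {((t, t) : G × G)}) =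
        a⁻¹ * b⁻¹ * a * b := by
  -- t is not a commutator
  have htnc : ¬ ∃ a b : G, t = a⁻¹ * b⁻¹ * a * b := (ht t).mpr rfl
  -- t⁻¹ = t, so t * t = 1
  have htinv : t⁻¹ = t := by
    apply (ht t⁻¹).mp
    rintro ⟨a, b, h⟩
    apply htnc
    refine ⟨b, a, ?_⟩
    have : t = (a⁻¹ * b⁻¹ * a * b)⁻¹ := by rw [← h, inv_inv]
    rw [this]; group
  have ht2 : t * t = 1 := by nth_rewrite 1 [← htinv]; exact inv_mul_cancel t
  -- t is central
  have hcen : ∀ g : G, g * t = t * g := by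
    intro g
    have h1 : g * t * g⁻¹ = t := by
      apply (ht (g * t * g⁻¹)).mp
      rintro ⟨a, b, h⟩
      apply htnc
      refine ⟨g⁻¹ * a * g, g⁻¹ * b * g, ?_⟩
      have : t = g⁻¹ * (a⁻¹ * b⁻¹ * a * b) * g := by
        rw [← h]; group
      rw [this]; group
    calc g * t = g * t * g⁻¹ * g := by group
    _ = t * g := by rw [h1]
  set z : G × G := (t, t) with hz
  have hz2 : z * z = 1 := by
    simp only [hz, Prod.mk_mul_mk, ht2]; rfl
  have hzcen : ∀ w : G × G, w * z = z * w := by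
    intro w
    simp only [hz, Prod.ext_iff, Prod.fst_mul, Prod.snd_mul]
    exact ⟨hcen w.1, hcen w.2⟩
  have hNormal : (Subgroup.zpowers z).Normal := by
    constructor
    intro n hn g
    obtain ⟨k, rfl⟩ := hn
    have hc : g * z ^ k = z ^ k * g := (Commute.zpow_right (hzcen g) k)
    have : g * z ^ k * g⁻¹ = z ^ k := by rw [hc, mul_assoc, mul_inv_cancel, mul_one]
    rw [this]; exact ⟨k, rfl⟩
  have hle : Subgroup.normalClosure {z} ≤ Subgroup.zpowers z :=
    Subgroup.normalClosure_le_normal (by simp [Subgroup.mem_zpowers])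
  have hzk : ∀ k : ℤ, z ^ k = 1 ∨ z ^ k = z := by
    have hz2' : z ^ (2 : ℤ) = 1 := by
      rw [show (2 : ℤ) = 1 + 1 by norm_num, zpow_add, zpow_one, hz2]
    intro k
    rcases Int.even_or_odd k with ⟨m, rfl⟩ | ⟨m, rfl⟩
    · left
      rw [show m + m = 2 * m by ring, zpow_mul, hz2', one_zpow]
    · right
      rw [zpow_add, zpow_mul, hz2', one_zpow, one_mul, zpow_one]
  rintro ⟨a, b, hab⟩
  obtain ⟨p, rfl⟩ := QuotientGroup.mk_surjective a
  obtain ⟨q, rfl⟩ := QuotientGroup.mk_surjective b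
  simp only [← QuotientGroup.mk_inv, ← QuotientGroup.mk_mul] at hab
  have hmem : ((t, 1) : G × G)⁻¹ * (p⁻¹ * q⁻¹ * p * q) ∈
      Subgroup.normalClosure {((t, t) : G × G)} := QuotientGroup.eq.mp hab
  have hmem' := hle hmem
  obtain ⟨k, hk⟩ := hmem'
  have hk2 : z ^ k = ((t, 1) : G × G)⁻¹ * (p⁻¹ * q⁻¹ * p * q) := hk
  rcases hzk k with h1 | h1 <;> rw [h1] at hk2
  · apply htnc
    refine ⟨p.1, q.1, ?_⟩
    have h2 := congrArg Prod.fst hk2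
    simp only [Prod.fst_mul, Prod.fst_inv, Prod.fst_one] at h2
    exact inv_mul_eq_one.mp h2.symm
  · apply htnc
    refine ⟨p.2, q.2, ?_⟩
    have h2 := congrArg Prod.snd hk2
    simp only [Prod.snd_mul, Prod.snd_inv, Prod.snd_one] at h2
    have h3 : t = (1 : G)⁻¹ * (p.2⁻¹ * q.2⁻¹ * p.2 * q.2) := h2
    rw [inv_one, one_mul] at h3
    exact h3
end

section
/- Let G be a finite nonabelian group with exactly one noncommutator t, let T be the normal subgroup of G × G generated by the element (t, t), and let K = (G × G)/T. Then every element of K distinct from the coset (t, 1)T is a commutator in K. -/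
/-- If `G` is a finite nonabelian group with exactly one noncommutator `t`,
`T` is the normal closure of `{(t, t)}` in `G × G` and `K = (G × G)/T`, then
every element of `K` distinct from the coset `(t, 1)T` is a commutator in `K`. -/
theorem stmt_7 {G : Type*} [Group G] [Finite G] (hna : ¬ ∀ a b : G, a * b = b * a) (t : G)
    (ht : ∀ x : G, (¬ ∃ a b : G, x = a⁻¹ * b⁻¹ * a * b) ↔ x = t) :
    ∀ k : (G × G) ⧸ Subgroup.normalClosure {((t, t) : G × G)},
      k ≠ QuotientGroup.mk ((t, 1) : G × G) →
        ∃ a b : (G × G) ⧸ Subgroup.normalClosure {((t, t) : G × G)},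
          k = a⁻¹ * b⁻¹ * a * b := by
  have h1t : (1 : G) ≠ t := by
    intro h
    exact ((ht 1).mpr h) ⟨1, 1, by group⟩
  have ht' : ∀ x : G, x ≠ t → ∃ a b : G, x = a⁻¹ * b⁻¹ * a * b := by
    intro x hx
    by_contra h
    exact hx ((ht x).mp h)
  have hone : (QuotientGroup.mk ((t, t) : G × G) :
      (G × G) ⧸ Subgroup.normalClosure {((t, t) : G × G)}) = 1 :=
    (QuotientGroup.eq_one_iff _).mpr (Subgroup.subset_normalClosure rfl)
  have hmul : ∀ g : G × G,
      (QuotientGroup.mk ((t, t) * g) :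
        (G × G) ⧸ Subgroup.normalClosure {((t, t) : G × G)}) = QuotientGroup.mk g := by
    intro g
    rw [QuotientGroup.mk_mul, hone, one_mul]
  have hpair : ∀ x y : G, x ≠ t → y ≠ t →
      ∃ a b : (G × G) ⧸ Subgroup.normalClosure {((t, t) : G × G)},
        (QuotientGroup.mk ((x, y) : G × G) :
          (G × G) ⧸ Subgroup.normalClosure {((t, t) : G × G)}) = a⁻¹ * b⁻¹ * a * b := by
    intro x y hx hy
    obtain ⟨a, b, hab⟩ := ht' x hx
    obtain ⟨c, d, hcd⟩ := ht' y hy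
    refine ⟨QuotientGroup.mk (a, c), QuotientGroup.mk (b, d), ?_⟩
    rw [← QuotientGroup.mk_inv, ← QuotientGroup.mk_inv, ← QuotientGroup.mk_mul,
      ← QuotientGroup.mk_mul, ← QuotientGroup.mk_mul]
    congr 1
    simp [Prod.ext_iff, hab, hcd]
  intro k hk
  induction k using QuotientGroup.induction_on with
  | H g =>
    obtain ⟨x, y⟩ := g
    by_cases hx : x = t
    · subst hx
      by_cases hy : y = x
      · subst hy
        exact ⟨1, 1, by rw [hone]; group⟩
      · -- mk (x, y) = mk (1, x⁻¹ * y)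
        have e1 : (QuotientGroup.mk ((x, y) : G × G) :
            (G × G) ⧸ Subgroup.normalClosure {((x, x) : G × G)}) =
            QuotientGroup.mk ((1, x⁻¹ * y) : G × G) := by
          rw [← hmul (1, x⁻¹ * y)]
          congr 1
          simp [Prod.ext_iff]
        by_cases hz : x⁻¹ * y = x
        · -- mk (1, x⁻¹ * y) = mk (1, x) = mk (x⁻¹, 1)
          rw [e1, hz]
          have e2 : (QuotientGroup.mk ((1, x) : G × G) :
              (G × G) ⧸ Subgroup.normalClosure {((x, x) : G × G)}) =
              QuotientGroup.mk ((x⁻¹, 1) : G × G) := by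
            rw [← hmul (x⁻¹, 1)]
            congr 1
            simp [Prod.ext_iff]
          rw [e2]
          by_cases hti : x⁻¹ = x
          · exfalso
            apply hk
            rw [e1, hz, e2, hti]
          · exact hpair x⁻¹ 1 hti h1t
        · rw [e1]
          exact hpair 1 (x⁻¹ * y) h1t hz
    · by_cases hy : y = t
      · subst hy
        have e1 : (QuotientGroup.mk ((x, y) : G × G) :
            (G × G) ⧸ Subgroup.normalClosure {((y, y) : G × G)}) =
            QuotientGroup.mk ((y⁻¹ * x, 1) : G × G) := by
          rw [← hmul (y⁻¹ * x, 1)]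
          congr 1
          simp [Prod.ext_iff]
        by_cases hz : y⁻¹ * x = y
        · exfalso
          apply hk
          rw [e1, hz]
        · rw [e1]
          exact hpair (y⁻¹ * x) 1 hz h1t
      · exact hpair x y hx hy
end

section
/- Let G be a finite nonabelian group with exactly one noncommutator t, let T be the normal subgroup of G × G generated by the element (t, t), and let K = (G × G)/T. Then K is a finite group with exactly one noncommutator, namely the coset (t, 1)T. -/
theorem nc_mem {H : Type*} [Group H] {s : H} (hs : s * s = 1) (hc : ∀ g : H, g * s = s * g)
    {z : H} : z ∈ Subgroup.normalClosure {s} ↔ z = 1 ∨ z = s := by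
  constructor
  · intro hz
    let S : Subgroup H :=
      { carrier := {1, s}
        one_mem' := Or.inl rfl
        mul_mem' := by rintro a b (rfl | rfl) (rfl | rfl) <;> simp [hs]
        inv_mem' := by
          rintro a (rfl | rfl)
          · simp
          · simp [inv_eq_of_mul_eq_one_left hs] }
    have hN : S.Normal := by
      constructor
      rintro n (rfl | rfl) g
      · have : g * (1:H) * g⁻¹ = 1 := by group
        rw [this]; exact S.one_mem
      · have : g * n * g⁻¹ = n := by rw [hc g]; group
        rw [this]; exact Or.inr rfl
    have hle : Subgroup.normalClosure {s} ≤ S :=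
      Subgroup.normalClosure_le_normal (by intro x hx; rw [Set.mem_singleton_iff] at hx; subst hx; exact Or.inr rfl)
    exact hle hz
  · rintro (rfl | rfl)
    · exact Subgroup.one_mem _
    · exact Subgroup.subset_normalClosure rfl

/-- If `G` is a finite nonabelian group with exactly one noncommutator `t`,
`T` is the normal closure of `{(t, t)}` in `G × G` and `K = (G × G)/T`, then `K` is
a finite group whose unique noncommutator is the coset `(t, 1)T`. -/
theorem stmt_8 {G : Type*} [Group G] [Finite G] (hna : ¬ ∀ a b : G, a * b = b * a) (t : G)
    (ht : ∀ x : G, (¬ ∃ a b : G, x = a⁻¹ * b⁻¹ * a * b) ↔ x = t) :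
    Finite ((G × G) ⧸ Subgroup.normalClosure {((t, t) : G × G)}) ∧
      ∀ k : (G × G) ⧸ Subgroup.normalClosure {((t, t) : G × G)},
        (¬ ∃ a b : (G × G) ⧸ Subgroup.normalClosure {((t, t) : G × G)},
            k = a⁻¹ * b⁻¹ * a * b) ↔
          k = QuotientGroup.mk ((t, 1) : G × G) := by
  have htc : ¬ ∃ a b : G, t = a⁻¹ * b⁻¹ * a * b := (ht t).mpr rfl
  have hcomm : ∀ x : G, x ≠ t → ∃ a b : G, x = a⁻¹ * b⁻¹ * a * b := by
    intro x hx
    by_contra h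
    exact hx ((ht x).mp h)
  have ht1 : t ≠ 1 := by
    intro h
    exact htc (h ▸ ⟨1, 1, by group⟩)
  have htinv : t⁻¹ = t := by
    by_contra h
    obtain ⟨a, b, hab⟩ := hcomm t⁻¹ h
    exact htc ⟨b, a, by rw [← inv_inv t, hab]; group⟩
  have ht2 : t * t = 1 := by
    calc t * t = t⁻¹ * t := by rw [htinv]
    _ = 1 := inv_mul_cancel t
  have hcen : ∀ g : G, g * t = t * g := by
    intro g
    by_contra h
    have hne : g * t * g⁻¹ ≠ t := by
      intro he
      apply h
      have := congrArg (· * g) he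
      simpa [mul_assoc] using this
    obtain ⟨a, b, hab⟩ := hcomm _ hne
    refine htc ⟨g⁻¹ * a * g, g⁻¹ * b * g, ?_⟩
    have : t = g⁻¹ * (g * t * g⁻¹) * g := by group
    rw [this, hab]; group
  -- facts about (t,t)
  have hs : ((t, t) : G × G) * (t, t) = 1 := by
    rw [Prod.ext_iff]; exact ⟨ht2, ht2⟩
  have hcn : ∀ g : G × G, g * (t, t) = (t, t) * g := by
    intro g
    rw [Prod.ext_iff]
    exact ⟨hcen g.1, hcen g.2⟩
  have hmem : ∀ z : G × G, z ∈ Subgroup.normalClosure {((t, t) : G × G)} ↔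
      z = 1 ∨ z = (t, t) := fun z => nc_mem hs hcn
  have hEq : ∀ (x y : G) (p : G × G),
      (QuotientGroup.mk ((x, y) : G × G) :
          (G × G) ⧸ Subgroup.normalClosure {((t, t) : G × G)}) = QuotientGroup.mk p ↔
        p = (x, y) ∨ p = (x * t, y * t) := by
    intro x y p
    rw [QuotientGroup.eq, hmem]
    constructor
    · rintro (h | h)
      · left
        have : p = (x, y) * ((x, y)⁻¹ * p) := by group
        rw [this, h]; group
      · right
        have : p = (x, y) * ((x, y)⁻¹ * p) := by group
        rw [this, h, Prod.ext_iff]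
        constructor <;> simp
    · rintro (rfl | rfl)
      · left; simp
      · right; rw [Prod.ext_iff]; constructor <;> simp
  refine ⟨Quotient.finite _, ?_⟩
  intro k
  obtain ⟨⟨x, y⟩, rfl⟩ := QuotientGroup.mk_surjective k
  constructor
  · intro hnc
    by_contra hne
    apply hnc
    have key : ∃ u v : G, (QuotientGroup.mk ((x, y) : G × G) :
        (G × G) ⧸ Subgroup.normalClosure {((t, t) : G × G)}) = QuotientGroup.mk ((u, v) : G × G)
        ∧ u ≠ t ∧ v ≠ t := by
      by_cases hx : x = t <;> by_cases hy : y = t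
      · exact ⟨x * t, y * t, (hEq x y _).mpr (Or.inr rfl), by rw [hx, ht2]; exact (Ne.symm ht1),
          by rw [hy, ht2]; exact (Ne.symm ht1)⟩
      · have hy1 : y ≠ 1 := by
          intro h
          exact hne (by rw [hx, h])
        refine ⟨x * t, y * t, (hEq x y _).mpr (Or.inr rfl), by rw [hx, ht2]; exact (Ne.symm ht1), ?_⟩
        intro h
        apply hy1
        have := congrArg (· * t⁻¹) h
        simpa [mul_assoc, htinv, ht2] using this
      · have hx1 : x ≠ 1 := by
          intro h
          apply hne
          have : ((t, 1) : G × G) = (x * t, y * t) := by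
            rw [Prod.ext_iff]; constructor <;> simp [h, hy, ht2]
          rw [this]
          exact ((hEq x y _).mpr (Or.inr rfl)).symm ▸ rfl
        refine ⟨x * t, y * t, (hEq x y _).mpr (Or.inr rfl), ?_, by rw [hy, ht2]; exact (Ne.symm ht1)⟩
        intro h
        apply hx1
        have := congrArg (· * t⁻¹) h
        simpa [mul_assoc, htinv, ht2] using this
      · exact ⟨x, y, rfl, hx, hy⟩
    obtain ⟨u, v, hquv, hu, hv⟩ := key
    obtain ⟨a, b, hab⟩ := hcomm u hu
    obtain ⟨c, d, hcd⟩ := hcomm v hv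
    refine ⟨QuotientGroup.mk ((a, c) : G × G), QuotientGroup.mk ((b, d) : G × G), ?_⟩
    rw [hquv, hab, hcd]
    rfl
  · intro hk ⟨A, B, hAB⟩
    obtain ⟨⟨a, c⟩, rfl⟩ := QuotientGroup.mk_surjective A
    obtain ⟨⟨b, d⟩, rfl⟩ := QuotientGroup.mk_surjective B
    rw [hk] at hAB
    have hAB' : (QuotientGroup.mk ((t, 1) : G × G) :
        (G × G) ⧸ Subgroup.normalClosure {((t, t) : G × G)}) =
        QuotientGroup.mk ((a⁻¹ * b⁻¹ * a * b, c⁻¹ * d⁻¹ * c * d) : G × G) := by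
      rw [hAB]; rfl
    rcases (hEq t 1 _).mp hAB' with h | h
    · exact htc ⟨a, b, (congrArg Prod.fst h).symm⟩
    · refine htc ⟨c, d, ?_⟩
      have h2 := congrArg Prod.snd h
      simp only [one_mul] at h2
      exact h2.symm
end

section
/- Let G be a finite nonabelian group with exactly one noncommutator t, let T be the normal subgroup of G × G generated by the element (t, t), and let K = (G × G)/T. Then |K| > |G|. -/
/-- If `G` is a finite nonabelian group with exactly one noncommutator `t`,
`T` is the normal closure of `{(t, t)}` in `G × G` and `K = (G × G)/T`, then `|K| > |G|`. -/
theorem stmt_9 {G : Type*} [Group G] [Finite G] (hna : ¬ ∀ a b : G, a * b = b * a) (t : G)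
    (ht : ∀ x : G, (¬ ∃ a b : G, x = a⁻¹ * b⁻¹ * a * b) ↔ x = t) :
    Nat.card ((G × G) ⧸ Subgroup.normalClosure {((t, t) : G × G)}) > Nat.card G := by
  -- t is a noncommutator
  have htnc : ¬ ∃ a b : G, t = a⁻¹ * b⁻¹ * a * b := (ht t).mpr rfl
  -- t ≠ 1
  have ht1 : t ≠ 1 := by
    intro h
    exact htnc ⟨1, 1, by simp [h]⟩
  -- t is central
  have hcent : ∀ g : G, g * t = t * g := by
    intro g
    by_contra h
    have hne : g * t * g⁻¹ ≠ t := by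
      intro he
      apply h
      have := congrArg (· * g) he
      simpa [mul_assoc] using this
    have : ∃ a b : G, g * t * g⁻¹ = a⁻¹ * b⁻¹ * a * b := by
      by_contra hc
      exact hne ((ht _).mp hc)
    obtain ⟨a, b, hab⟩ := this
    apply htnc
    refine ⟨g⁻¹ * a * g, g⁻¹ * b * g, ?_⟩
    have : t = g⁻¹ * (a⁻¹ * b⁻¹ * a * b) * g := by
      rw [← hab]; group
    rw [this]; group
  -- t⁻¹ = t, so t^2 = 1
  have htsq : t * t = 1 := by
    have h1 : ¬ ∃ a b : G, t⁻¹ = a⁻¹ * b⁻¹ * a * b := by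
      rintro ⟨a, b, hab⟩
      apply htnc
      refine ⟨b, a, ?_⟩
      have := congrArg (·⁻¹) hab
      simpa [mul_assoc] using this
    have := (ht t⁻¹).mp h1
    calc t * t = t * t⁻¹ := by rw [this]
    _ = 1 := mul_inv_cancel t
  -- (t,t) is central in G × G
  have hcent2 : ((t, t) : G × G) ∈ Subgroup.center (G × G) := by
    rw [Subgroup.mem_center_iff]
    intro g
    exact Prod.ext (hcent g.1) (hcent g.2)
  -- zpowers (t,t) is normal
  haveI hnorm : (Subgroup.zpowers ((t, t) : G × G)).Normal := by
    constructor
    intro x hx g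
    obtain ⟨k, hk⟩ := hx
    simp only at hk
    have : g * x * g⁻¹ = x := by
      rw [← hk]
      have hc : ∀ m : ℤ, ((t,t) : G × G) ^ m * g = g * (t,t) ^ m := fun m => by
        exact ((Subgroup.mem_center_iff.mp (Subgroup.zpow_mem (Subgroup.center _) hcent2 m)) g).symm
      rw [← hc k, mul_assoc, mul_inv_cancel, mul_one]
    rw [this, ← hk]
    exact ⟨k, rfl⟩
  -- normalClosure = zpowers
  have hTeq : Subgroup.normalClosure {((t, t) : G × G)} = Subgroup.zpowers ((t, t) : G × G) := by
    apply le_antisymm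
    · exact Subgroup.normalClosure_le_normal (by simp [Subgroup.mem_zpowers])
    · rw [Subgroup.zpowers_eq_closure]
      exact Subgroup.closure_le_normalClosure
  -- order of (t,t) is 2
  have hne1 : ((t, t) : G × G) ≠ 1 := by
    intro h
    exact ht1 (congrArg Prod.fst h)
  have hord : orderOf ((t, t) : G × G) = 2 := by
    haveI : Fact (Nat.Prime 2) := ⟨Nat.prime_two⟩
    apply orderOf_eq_prime
    · exact Prod.ext (by simpa [sq] using htsq) (by simpa [sq] using htsq)
    · exact hne1
  have hcardT : Nat.card (Subgroup.normalClosure {((t, t) : G × G)}) = 2 := by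
    rw [hTeq, Nat.card_zpowers, hord]
  -- |G| ≥ 3
  push_neg at hna
  obtain ⟨a, b, hab⟩ := hna
  have ha1 : a ≠ 1 := by rintro rfl; simp at hab
  have hb1 : b ≠ 1 := by rintro rfl; simp at hab
  have habne : a ≠ b := by rintro rfl; exact hab rfl
  have hG3 : 3 ≤ Nat.card G := by
    have ha1' := ha1.symm
    have hb1' := hb1.symm
    have habne' := habne.symm
    have hinj : Function.Injective (![1, a, b] : Fin 3 → G) := by
      intro i j hij
      fin_cases i <;> fin_cases j <;> simp_all
    simpa using Nat.card_le_card_of_injective _ hinj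
  -- card counting
  have hcount := Subgroup.card_eq_card_quotient_mul_card_subgroup
    (Subgroup.normalClosure {((t, t) : G × G)})
  rw [hcardT, Nat.card_prod] at hcount
  set n := Nat.card G
  set q := Nat.card ((G × G) ⧸ Subgroup.normalClosure {((t, t) : G × G)})
  have h3n : 3 * n ≤ n * n := Nat.mul_le_mul_right n hG3
  omega
end

section
/- Suppose there exists a finite nonabelian group with exactly one noncommutator. Then for every natural number n there exists a finite group of order greater than n with exactly one noncommutator; in other words, there are infinitely many finite groups (up to isomorphism) with exactly one noncommutator. -/
private lemma one_noncomm_step (K : Type) [Group K] [Finite K] (hcard : 3 ≤ Nat.card K)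
    (h : ∃! t : K, ¬ ∃ a b : K, t = a⁻¹ * b⁻¹ * a * b) :
    ∃ (K' : Type) (_ : Group K') (_ : Finite K'),
      Nat.card K < Nat.card K' ∧ 3 ≤ Nat.card K' ∧
        ∃! t : K', ¬ ∃ a b : K', t = a⁻¹ * b⁻¹ * a * b := by
  obtain ⟨t, ht, huniq⟩ := h
  -- commutators are exactly the elements ≠ t
  have hchar : ∀ x : K, (∃ a b : K, x = a⁻¹ * b⁻¹ * a * b) ↔ x ≠ t := by
    intro x
    constructor
    · rintro ⟨a, b, rfl⟩ hx
      exact ht ⟨a, b, hx ▸ rfl⟩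
    · intro hx
      by_contra hc
      exact hx (huniq x hc)
  have ht1 : t ≠ 1 := by
    intro h1
    exact ht ⟨1, 1, by subst h1; group⟩
  -- t is central
  have hcen : ∀ g : K, t * g = g * t := by
    intro g
    have : ¬ ∃ a b : K, g⁻¹ * t * g = a⁻¹ * b⁻¹ * a * b := by
      rintro ⟨a, b, hab⟩
      refine ht ⟨g * a * g⁻¹, g * b * g⁻¹, ?_⟩
      have : t = g * (a⁻¹ * b⁻¹ * a * b) * g⁻¹ := by
        rw [← hab]; group
      rw [this]; group
    have := huniq _ this
    calc t * g = g * (g⁻¹ * t * g) := by group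
    _ = g * t := by rw [this]
  have ht2 : t * t = 1 := by
    have : ¬ ∃ a b : K, t⁻¹ = a⁻¹ * b⁻¹ * a * b := by
      rintro ⟨a, b, hab⟩
      refine ht ⟨b, a, ?_⟩
      have : t = (a⁻¹ * b⁻¹ * a * b)⁻¹ := by rw [← hab]; group
      rw [this]; group
    have h3 := huniq _ this
    calc t * t = t * (t⁻¹)⁻¹ := by group
    _ = 1 := by rw [h3]; group
  -- the central element z = (t,t)
  set z : K × K := (t, t) with hz
  have hz2 : z * z = 1 := by
    simp [hz, Prod.ext_iff, ht2]
  have hz1 : z ≠ 1 := by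
    simp [hz, Prod.ext_iff, ht1]
  have hzcomm : ∀ w : K × K, Commute z w := by
    rintro ⟨a, b⟩
    simp [Commute, SemiconjBy, hz, Prod.ext_iff, hcen a, hcen b]
  set N : Subgroup (K × K) := Subgroup.zpowers z with hN
  have hmemN : ∀ w : K × K, w ∈ N ↔ w = 1 ∨ w = z := by
    intro w
    constructor
    · rintro hw
      obtain ⟨k, rfl⟩ := Subgroup.mem_zpowers_iff.mp hw
      rcases Int.even_or_odd k with ⟨m, hm⟩ | ⟨m, hm⟩
      · left
        subst hm
        rw [show m + m = 2 * m by ring, zpow_mul]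
        norm_num [show z ^ (2:ℤ) = 1 by rw [show (2:ℤ) = (2:ℕ) by norm_num, zpow_natCast, pow_two, hz2]]
      · right
        subst hm
        rw [zpow_add, zpow_mul]
        norm_num [show z ^ (2:ℤ) = 1 by rw [show (2:ℤ) = (2:ℕ) by norm_num, zpow_natCast, pow_two, hz2]]
    · rintro (rfl | rfl)
      · exact one_mem N
      · exact Subgroup.mem_zpowers z
  haveI hNnormal : N.Normal := by
    constructor
    intro n hn g
    have : g * n * g⁻¹ = n := by
      have hc : Commute n g := ((hmemN n).mp hn).elim (fun h => h ▸ Commute.one_left g)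
        (fun h => h ▸ hzcomm g)
      rw [← hc.eq]; group
    rwa [this]
  set Q := (K × K) ⧸ N with hQ
  haveI : Finite Q := Quotient.finite _
  -- quotient equality
  have hqeq : ∀ u v : K × K, (u : Q) = (v : Q) ↔ v = u ∨ v = u * z := by
    intro u v
    rw [QuotientGroup.eq, hmemN]
    constructor
    · rintro (h1 | h1)
      · left; calc v = u * (u⁻¹ * v) := by group
        _ = u := by rw [h1]; group
      · right; calc v = u * (u⁻¹ * v) := by group
        _ = u * z := by rw [h1]
    · rintro (rfl | rfl)
      · left; group
      · right; group
  -- characterization of commutators in Q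
  have hqchar : ∀ w : Q, (∃ a b : Q, w = a⁻¹ * b⁻¹ * a * b) ↔
      ∃ u : K × K, (u : Q) = w ∧ u.1 ≠ t ∧ u.2 ≠ t := by
    intro w
    constructor
    · rintro ⟨a, b, rfl⟩
      obtain ⟨a', rfl⟩ := QuotientGroup.mk_surjective a
      obtain ⟨b', rfl⟩ := QuotientGroup.mk_surjective b
      refine ⟨a'⁻¹ * b'⁻¹ * a' * b', rfl, ?_, ?_⟩
      · exact (hchar _).mp ⟨a'.1, b'.1, rfl⟩
      · exact (hchar _).mp ⟨a'.2, b'.2, rfl⟩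
    · rintro ⟨u, rfl, h1, h2⟩
      obtain ⟨a1, b1, hab1⟩ := (hchar u.1).mpr h1
      obtain ⟨a2, b2, hab2⟩ := (hchar u.2).mpr h2
      refine ⟨((a1, a2) : K × K), ((b1, b2) : K × K), ?_⟩
      have : u = ((a1, a2) : K × K)⁻¹ * (b1, b2)⁻¹ * (a1, a2) * (b1, b2) := by
        ext
        · exact hab1
        · exact hab2
      rw [this]
      rfl
  -- the unique noncommutator in Q
  have hxt : ∀ x : K, x * t = t ↔ x = 1 := by
    intro x
    constructor
    · intro hx
      have : x * t = 1 * t := by rw [hx, one_mul]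
      exact mul_right_cancel this
    · rintro rfl; rw [one_mul]
  have hτ : ¬ ∃ a b : Q, ((((t, 1) : K × K) : Q)) = a⁻¹ * b⁻¹ * a * b := by
    intro hc
    obtain ⟨u, hu, h1, h2⟩ := (hqchar _).mp hc
    rcases (hqeq _ _).mp hu.symm with rfl | rfl
    · exact h1 rfl
    · exact h2 (by simp [hz, Prod.ext_iff])
  refine ⟨Q, inferInstance, inferInstance, ?_, ?_, ⟨(((t, 1) : K × K) : Q), hτ, ?_⟩⟩
  · -- cardinality facts
    have hcardN : Nat.card N = 2 := by
      rw [hN, Nat.card_zpowers]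
      exact orderOf_eq_prime (by rw [pow_two, hz2]) hz1
    have hcardH : Nat.card (K × K) = Nat.card Q * 2 := by
      rw [← hcardN]
      exact Subgroup.card_eq_card_quotient_mul_card_subgroup N
    rw [Nat.card_prod] at hcardH
    nlinarith [hcardH, hcard]
  · have hcardN : Nat.card N = 2 := by
      rw [hN, Nat.card_zpowers]
      exact orderOf_eq_prime (by rw [pow_two, hz2]) hz1
    have hcardH : Nat.card (K × K) = Nat.card Q * 2 := by
      rw [← hcardN]
      exact Subgroup.card_eq_card_quotient_mul_card_subgroup N
    rw [Nat.card_prod] at hcardH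
    nlinarith [hcardH, hcard]
  · -- uniqueness
    intro w hw
    obtain ⟨u, rfl⟩ := QuotientGroup.mk_surjective w
    have hq := hqchar (u : Q)
    rw [hq] at hw
    push_neg at hw
    have h1 := hw u rfl
    have h2 := hw (u * z) (((hqeq u (u * z)).mpr (Or.inr rfl)).symm)
    simp only [hz, Prod.fst_mul, Prod.snd_mul] at h2
    rw [(hqeq _ _)]
    rcases eq_or_ne u.1 t with hu1 | hu1
    · have h2' := h2 (by rw [hu1, ht2]; exact Ne.symm ht1)
      have hu2 : u.2 = 1 := (hxt u.2).mp h2'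
      left
      ext <;> simp [hu1, hu2]
    · have hu2 : u.2 = t := h1 hu1
      have hu1' : u.1 = 1 := by
        by_contra hne
        have hne' : u.1 * t ≠ t := fun hh => hne ((hxt _).mp hh)
        have h21 : u.2 = 1 := (hxt _).mp (h2 hne')
        exact ht1 (by rw [← hu2, h21])
      right
      ext <;> simp [hz, hu1', hu2, ht2]

/-- If there exists a finite nonabelian group with exactly one noncommutator, then for
every `n` there is a finite group of order greater than `n` with exactly one
noncommutator; in other words, there are infinitely many such groups up to isomorphism. -/
theorem stmt_11
    (h : ∃ (G : Type) (_ : Group G) (_ : Finite G),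
      (¬ ∀ a b : G, a * b = b * a) ∧ ∃! t : G, ¬ ∃ a b : G, t = a⁻¹ * b⁻¹ * a * b) :
    ∀ n : ℕ, ∃ (K : Type) (_ : Group K) (_ : Finite K),
      Nat.card K > n ∧ ∃! t : K, ¬ ∃ a b : K, t = a⁻¹ * b⁻¹ * a * b := by
  obtain ⟨G, _, _, hna, hG⟩ := h
  -- card G ≥ 3 since G is nonabelian
  push_neg at hna
  obtain ⟨a, b, hab⟩ := hna
  have ha1 : a ≠ 1 := by rintro rfl; simp at hab
  have hb1 : b ≠ 1 := by rintro rfl; simp at hab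
  have habne : a ≠ b := by rintro rfl; exact hab rfl
  have hcardG : 3 ≤ Nat.card G := by
    have hinj : Function.Injective (![1, a, b] : Fin 3 → G) := by
      intro i j hij
      fin_cases i <;> fin_cases j <;> simp_all
    calc 3 = Nat.card (Fin 3) := by simp
    _ ≤ Nat.card G := Nat.card_le_card_of_injective _ hinj
  -- strengthened claim by induction
  have key : ∀ n : ℕ, ∃ (K : Type) (_ : Group K) (_ : Finite K),
      Nat.card K > n ∧ 3 ≤ Nat.card K ∧
        ∃! t : K, ¬ ∃ a b : K, t = a⁻¹ * b⁻¹ * a * b := by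
    intro n
    induction n with
    | zero => exact ⟨G, inferInstance, inferInstance, by omega, hcardG, hG⟩
    | succ m ih =>
      obtain ⟨K, _, _, hK1, hK2, hK3⟩ := ih
      obtain ⟨K', _, _, h1, h2, h3⟩ := one_noncomm_step K hK2 hK3
      exact ⟨K', inferInstance, inferInstance, by omega, h2, h3⟩
  intro n
  obtain ⟨K, _, _, h1, _, h3⟩ := key n
  exact ⟨K, inferInstance, inferInstance, h1, h3⟩
end

section
/- Suppose there exists a finite nonabelian group with exactly one noncommutator. Then there exists an infinite group of finite exponent with exactly one noncommutator. -/
/-!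
If `t` is the only noncommutator of `G`, then so are `t⁻¹` and every conjugate of `t`, hence `t`
is central of order two. Take the finitely supported functions `ℕ → G` and identify all the
copies of `t`, i.e. divide out the vectors `t^s` with `s` finite of even size. An element of the
quotient is a commutator iff one of its representatives is a commutator in every coordinate,
i.e. avoids the value `t`. Multiplying `x` by `t` on the coordinates where it equals `t` (and,
to fix the parity, on one coordinate outside `{1, t}`) achieves this, unless `x = t^s` with `|s|`
odd; all these `x` give the same class, which is therefore the unique noncommutator. The
quotient is infinite, since the copies of an element outside `{1, t}` stay distinct, and has
exponent dividing `|G|`.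
-/

open Function Subgroup
open scoped commutatorElement

lemma exists_eq_inv_mul_inv_mul_mul_iff_mem_commutatorSet {G : Type*} [Group G] {g : G} :
    (∃ a b : G, g = a⁻¹ * b⁻¹ * a * b) ↔ g ∈ commutatorSet G := by
  constructor
  · rintro ⟨a, b, rfl⟩
    exact ⟨a⁻¹, b⁻¹, by simp [commutatorElement_def]⟩
  · rintro ⟨a, b, rfl⟩
    exact ⟨a⁻¹, b⁻¹, by simp [commutatorElement_def]⟩

lemma exists_ne_one_mem_commutatorSet {G : Type*} [Group G] (h : ¬ ∀ a b : G, a * b = b * a) :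
    ∃ g ∈ commutatorSet G, g ≠ 1 := by
  push Not at h
  obtain ⟨a, b, hab⟩ := h
  exact ⟨⁅a, b⁆, commutator_mem_commutatorSet a b,
    fun h1 => hab (commutatorElement_eq_one_iff_mul_comm.mp h1)⟩

lemma QuotientGroup.mk_commutatorElement {G : Type*} [Group G] {N : Subgroup G} [N.Normal]
    (a b : G) : ((⁅a, b⁆ : G) : G ⧸ N) = ⁅(a : G ⧸ N), (b : G ⧸ N)⁆ :=
  map_commutatorElement (QuotientGroup.mk' N) a b

lemma QuotientGroup.mk_mem_commutatorSet_iff {G : Type*} [Group G] (N : Subgroup G) [N.Normal]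
    (x : G) :
    (x : G ⧸ N) ∈ commutatorSet (G ⧸ N) ↔ ∃ n ∈ N, x * n ∈ commutatorSet G := by
  constructor
  · rintro ⟨a, b, hab⟩
    induction a using QuotientGroup.induction_on with | H a => ?_
    induction b using QuotientGroup.induction_on with | H b => ?_
    rw [← QuotientGroup.mk_commutatorElement] at hab
    refine ⟨x⁻¹ * ⁅a, b⁆, QuotientGroup.eq.mp hab.symm, ?_⟩
    rw [mul_inv_cancel_left]
    exact commutator_mem_commutatorSet a b
  · rintro ⟨n, hn, a, b, hab⟩
    refine ⟨a, b, ?_⟩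
    rw [← QuotientGroup.mk_mul_of_mem x hn, ← hab, QuotientGroup.mk_commutatorElement]

section UniqueNoncommutator

variable {G : Type*} [Group G] {t : G}

lemma inv_eq_self_of_unique_noncommutator (hG : ∀ g, g ∈ commutatorSet G ↔ g ≠ t) :
    t⁻¹ = t := by
  by_contra h
  obtain ⟨a, b, hab⟩ := (hG _).mpr h
  exact (hG t).mp ⟨b, a, by rw [← commutatorElement_inv, hab, inv_inv]⟩ rfl

lemma mul_self_eq_one_of_unique_noncommutator (hG : ∀ g, g ∈ commutatorSet G ↔ g ≠ t) :
    t * t = 1 := by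
  nth_rw 2 [← inv_eq_self_of_unique_noncommutator hG]
  exact mul_inv_cancel t

lemma mem_center_of_unique_noncommutator (hG : ∀ g, g ∈ commutatorSet G ↔ g ≠ t) :
    t ∈ center G := by
  refine mem_center_iff.mpr fun g => ?_
  suffices g * t * g⁻¹ = t by rw [← this, inv_mul_cancel_right, this]
  by_contra h
  obtain ⟨a, b, hab⟩ := (hG _).mpr h
  refine (hG t).mp ⟨g⁻¹ * a * g, g⁻¹ * b * g, ?_⟩ rfl
  simpa [hab, mul_assoc] using (conjugate_commutatorElement a b g⁻¹).symm

end UniqueNoncommutator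

lemma Finset.even_card_symmDiff_iff {α : Type*} [DecidableEq α] (s u : Finset α) :
    Even (symmDiff s u).card ↔ (Even s.card ↔ Even u.card) := by
  have hcard : (symmDiff s u).card + 2 * (s ∩ u).card = s.card + u.card := by
    rw [symmDiff_eq_sup_sdiff_inf, ← card_union_add_card_inter s u,
      card_sdiff_of_subset (inf_le_sup : s ∩ u ≤ s ∪ u)]
    have := card_le_card (inf_le_sup : s ∩ u ≤ s ∪ u)
    simp only [Finset.sup_eq_union, Finset.inf_eq_inter] at *
    omega
  rw [← Nat.even_add, ← hcard, Nat.even_add]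
  simp

variable (ι G : Type*) [Group G]

def finiteMulSupportSubgroup : Subgroup (ι → G) where
  carrier := {x | x.HasFiniteMulSupport}
  mul_mem' := HasFiniteMulSupport.mul
  one_mem' := hasFiniteMulSupport_fun_one
  inv_mem' := HasFiniteMulSupport.inv

variable {ι G}

local notation "D" => finiteMulSupportSubgroup ι G

lemma mem_commutatorSet_finiteMulSupportSubgroup_iff (x : D) :
    x ∈ commutatorSet D ↔ ∀ i, (x : ι → G) i ∈ commutatorSet G := by
  constructor
  · rintro ⟨a, b, rfl⟩ i
    exact commutator_mem_commutatorSet _ _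
  · intro hx
    have (i : ι) :
        ∃ a b : G, ⁅a, b⁆ = (x : ι → G) i ∧
          ((x : ι → G) i = 1 → a = 1 ∧ b = 1) := by
      by_cases h1 : (x : ι → G) i = 1
      · exact ⟨1, 1, by simp [h1], fun _ => ⟨rfl, rfl⟩⟩
      · obtain ⟨a, b, hab⟩ := hx i
        exact ⟨a, b, hab, fun h => absurd h h1⟩
    choose a b hab hsupp using this
    have ha : a.HasFiniteMulSupport := x.2.subset fun i hi h1 => hi (hsupp i h1).1
    have hb : b.HasFiniteMulSupport := x.2.subset fun i hi h1 => hi (hsupp i h1).2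
    exact ⟨⟨a, ha⟩, ⟨b, hb⟩, Subtype.ext (funext hab)⟩

lemma pow_natCard_eq_one_quotient [Finite G] (N : Subgroup D) [N.Normal] (y : D ⧸ N) :
    y ^ Nat.card G = 1 := by
  induction y using QuotientGroup.induction_on with | H x => ?_
  rw [← QuotientGroup.mk_pow, ← QuotientGroup.mk_one]
  congr 1
  exact Subtype.ext (funext fun i => pow_card_eq_one')

variable [DecidableEq ι]

def mulIndicatorConst (t : G) (s : Finset ι) : D :=
  ⟨fun i => if i ∈ s then t else 1, s.finite_toSet.subset fun i hi => by
    by_contra h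
    exact hi (if_neg h)⟩

lemma mulIndicatorConst_apply (t : G) (s : Finset ι) (i : ι) :
    (mulIndicatorConst t s : ι → G) i = if i ∈ s then t else 1 := rfl

lemma eq_of_mulIndicatorConst_separated {t : G} {s u : Finset ι}
    (h1 : ∀ i ∈ u, (mulIndicatorConst t s : ι → G) i ≠ 1)
    (h2 : ∀ i ∉ u, (mulIndicatorConst t s : ι → G) i ≠ t) : u = s := by
  ext i
  by_cases hi : i ∈ s
  · simpa [mulIndicatorConst_apply, hi] using mt (h2 i)
  · simpa [mulIndicatorConst_apply, hi] using mt (h1 i)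

lemma exists_even_separated_of_ne_mulIndicatorConst {t : G} (ht1 : t ≠ 1) (x : D)
    (hx : ∀ s : Finset ι, Odd s.card → mulIndicatorConst t s ≠ x) :
    ∃ u : Finset ι, Even u.card ∧
      (∀ i ∈ u, (x : ι → G) i ≠ 1) ∧ ∀ i ∉ u, (x : ι → G) i ≠ t := by
  classical
  have hfin : (mulSupport (x : ι → G)).Finite := x.2
  set B := hfin.toFinset
  set A := B.filter fun i => (x : ι → G) i = t
  have hB : ∀ i, i ∈ B ↔ (x : ι → G) i ≠ 1 := fun i => by simp [B]
  have hA : ∀ i, i ∈ A ↔ (x : ι → G) i = t := fun i => by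
    rw [Finset.mem_filter, hB, and_iff_right_iff_imp]
    exact fun h => h ▸ ht1
  have hAB : A ⊆ B := Finset.filter_subset _ _
  have hxt : ∀ i ∉ A, (x : ι → G) i ≠ t := fun i hi => mt (hA i).mpr hi
  have hx1 : ∀ i ∈ A, (x : ι → G) i ≠ 1 := fun i hi => (hB i).mp (hAB hi)
  rcases Nat.even_or_odd A.card with hAeven | hAodd
  · exact ⟨A, hAeven, hx1, hxt⟩
  obtain ⟨j, hjB, hjA⟩ : ∃ j ∈ B, j ∉ A := by
    by_contra! hBA
    refine hx A hAodd (Subtype.ext (funext fun i => ?_))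
    by_cases hi : i ∈ A
    · rw [mulIndicatorConst_apply, if_pos hi, (hA i).mp hi]
    · rw [mulIndicatorConst_apply, if_neg hi]
      exact (not_not.mp (mt (hB i).mpr (mt (hBA i) hi))).symm
  refine ⟨insert j A, ?_, ?_, fun i hi => hxt i (mt Finset.mem_insert_of_mem hi)⟩
  · rw [Finset.card_insert_of_notMem hjA]
    exact hAodd.add_one
  · rintro i hi
    rcases Finset.mem_insert.mp hi with rfl | hi
    · exact (hB i).mp hjB
    · exact hx1 i hi

section Involution

variable {t : G}

lemma mulIndicatorConst_mul (ht : t * t = 1) (s u : Finset ι) :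
    mulIndicatorConst t s * mulIndicatorConst t u = mulIndicatorConst t (symmDiff s u) := by
  ext i
  simp only [Subgroup.coe_mul, Pi.mul_apply, mulIndicatorConst_apply, Finset.mem_symmDiff]
  split_ifs <;> simp_all

lemma mulIndicatorConst_inv (ht : t * t = 1) (s : Finset ι) :
    (mulIndicatorConst t s)⁻¹ = mulIndicatorConst t s := by
  refine inv_eq_of_mul_eq_one_right ?_
  rw [mulIndicatorConst_mul ht, symmDiff_self]
  ext i
  simp [mulIndicatorConst_apply]

variable (ι) in
def evenIndicatorSubgroup (ht : t * t = 1) : Subgroup D where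
  carrier := {x | ∃ s : Finset ι, Even s.card ∧ mulIndicatorConst t s = x}
  mul_mem' := by
    rintro _ _ ⟨s, hs, rfl⟩ ⟨u, hu, rfl⟩
    exact ⟨symmDiff s u, (s.even_card_symmDiff_iff u).mpr (iff_of_true hs hu),
      (mulIndicatorConst_mul ht s u).symm⟩
  one_mem' := ⟨∅, by simp, by ext i; simp [mulIndicatorConst_apply]⟩
  inv_mem' := by
    rintro _ ⟨s, hs, rfl⟩
    exact ⟨s, hs, (mulIndicatorConst_inv ht s).symm⟩

lemma evenIndicatorSubgroup_normal (ht : t * t = 1) (hc : t ∈ center G) :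
    (evenIndicatorSubgroup ι ht).Normal where
  conj_mem := by
    rintro _ ⟨s, hs, rfl⟩ g
    refine ⟨s, hs, ?_⟩
    ext i
    simp only [Subgroup.coe_mul, Subgroup.coe_inv, Pi.mul_apply, Pi.inv_apply,
      mulIndicatorConst_apply]
    split_ifs
    · rw [mem_center_iff.mp hc, mul_inv_cancel_right]
    · rw [mul_one, mul_inv_cancel]

lemma mk_mulIndicatorConst_eq_of_odd (ht : t * t = 1) {s u : Finset ι} (hs : Odd s.card)
    (hu : Odd u.card) :
    (mulIndicatorConst t s : D ⧸ evenIndicatorSubgroup ι ht) = mulIndicatorConst t u := by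
  rw [QuotientGroup.eq, mulIndicatorConst_inv ht, mulIndicatorConst_mul ht]
  exact ⟨_, (s.even_card_symmDiff_iff u).mpr
    (iff_of_false (Nat.not_even_iff_odd.mpr hs) (Nat.not_even_iff_odd.mpr hu)), rfl⟩

lemma infinite_quotient_evenIndicatorSubgroup [Infinite ι] (ht : t * t = 1) {g : G}
    (hg1 : g ≠ 1) (hgt : g ≠ t) : Infinite (D ⧸ evenIndicatorSubgroup ι ht) := by
  let single (i : ι) : D :=
    ⟨Pi.mulSingle i g, (Set.finite_singleton i).subset Pi.mulSupport_mulSingle_subset⟩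
  refine Infinite.of_injective (fun i => (single i : D ⧸ evenIndicatorSubgroup ι ht)) ?_
  intro i j hij
  by_contra hne
  obtain ⟨s, -, hs⟩ := QuotientGroup.eq.mp hij
  have hi := congrFun (congrArg Subtype.val hs) i
  simp only [single, mulIndicatorConst_apply, Subgroup.coe_mul, Subgroup.coe_inv, Pi.mul_apply,
    Pi.inv_apply, Pi.mulSingle_eq_same, Pi.mulSingle_eq_of_ne hne, mul_one] at hi
  split_ifs at hi
  · exact hgt (by rw [← inv_inv g, ← hi, inv_eq_of_mul_eq_one_right ht])
  · exact hg1 (inv_eq_one.mp hi.symm)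

end Involution

section Quotient

variable {t : G} (ht : t * t = 1) [(evenIndicatorSubgroup ι ht).Normal]

local notation "Q" => D ⧸ evenIndicatorSubgroup ι ht

/-- The condition on `u` says that no coordinate of `x * mulIndicatorConst t u` equals `t`,
i.e. that this representative of `x` is a commutator coordinatewise. -/
lemma mk_mem_commutatorSet_iff (hG : ∀ g, g ∈ commutatorSet G ↔ g ≠ t) (x : D) :
    (x : Q) ∈ commutatorSet Q ↔
      ∃ u : Finset ι, Even u.card ∧
        (∀ i ∈ u, (x : ι → G) i ≠ 1) ∧ ∀ i ∉ u, (x : ι → G) i ≠ t := by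
  have hcoord (u : Finset ι) (i : ι) :
      ((x * mulIndicatorConst t u : D) : ι → G) i ∈ commutatorSet G ↔
        (i ∈ u → (x : ι → G) i ≠ 1) ∧ (i ∉ u → (x : ι → G) i ≠ t) := by
    by_cases hi : i ∈ u <;> simp [hG, mulIndicatorConst_apply, hi]
  rw [QuotientGroup.mk_mem_commutatorSet_iff]
  constructor
  · rintro ⟨_, ⟨u, hu, rfl⟩, hxu⟩
    rw [mem_commutatorSet_finiteMulSupportSubgroup_iff] at hxu
    exact ⟨u, hu, fun i => ((hcoord u i).mp (hxu i)).1, fun i => ((hcoord u i).mp (hxu i)).2⟩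
  · rintro ⟨u, hu, hx1, hxt⟩
    refine ⟨_, ⟨u, hu, rfl⟩, ?_⟩
    exact (mem_commutatorSet_finiteMulSupportSubgroup_iff _).mpr
      fun i => (hcoord u i).mpr ⟨hx1 i, hxt i⟩

lemma mk_notMem_commutatorSet_iff (hG : ∀ g, g ∈ commutatorSet G ↔ g ≠ t) (x : D) :
    (x : Q) ∉ commutatorSet Q ↔
      ∃ s : Finset ι, Odd s.card ∧ mulIndicatorConst t s = x := by
  rw [mk_mem_commutatorSet_iff ht hG]
  constructor
  · intro hx
    by_contra! hne
    have ht1 : t ≠ 1 := ((hG 1).mp (one_mem_commutatorSet G)).symm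
    exact hx (exists_even_separated_of_ne_mulIndicatorConst ht1 x hne)
  · rintro ⟨s, hs, rfl⟩ ⟨u, hu, h1, h2⟩
    rw [eq_of_mulIndicatorConst_separated h1 h2] at hu
    exact Nat.not_even_iff_odd.mpr hs hu

lemma existsUnique_notMem_commutatorSet [Nonempty ι]
    (hG : ∀ g, g ∈ commutatorSet G ↔ g ≠ t) :
    ∃! y : Q, y ∉ commutatorSet Q := by
  obtain ⟨i₀⟩ := ‹Nonempty ι›
  have hodd : Odd ({i₀} : Finset ι).card := by simp
  have hmem := (mk_notMem_commutatorSet_iff ht hG _).mpr ⟨_, hodd, rfl⟩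
  refine ⟨mulIndicatorConst t {i₀}, hmem, fun y hy => ?_⟩
  induction y using QuotientGroup.induction_on with | H x => ?_
  obtain ⟨s, hs, rfl⟩ := (mk_notMem_commutatorSet_iff ht hG x).mp hy
  exact mk_mulIndicatorConst_eq_of_odd ht hs hodd

end Quotient

/-- If there exists a finite nonabelian group with exactly one noncommutator, then there
exists an infinite group of finite exponent with exactly one noncommutator. -/
theorem stmt_16
    (h : ∃ (G : Type) (_ : Group G) (_ : Finite G),
      (¬ ∀ a b : G, a * b = b * a) ∧ ∃! t : G, ¬ ∃ a b : G, t = a⁻¹ * b⁻¹ * a * b) :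
    ∃ (H : Type) (_ : Group H), Infinite H ∧ (∃ n : ℕ, 0 < n ∧ ∀ g : H, g ^ n = 1) ∧
      ∃! t : H, ¬ ∃ a b : H, t = a⁻¹ * b⁻¹ * a * b := by
  simp only [exists_eq_inv_mul_inv_mul_mul_iff_mem_commutatorSet] at h ⊢
  obtain ⟨G, _, _, hnonabelian, t, ht, huniq⟩ := h
  have hG (g : G) : g ∈ commutatorSet G ↔ g ≠ t :=
    ⟨fun hg hgt => ht (hgt ▸ hg), fun hgt => by_contra fun hg => hgt (huniq g hg)⟩
  have htt := mul_self_eq_one_of_unique_noncommutator hG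
  have := evenIndicatorSubgroup_normal (ι := ℕ) htt (mem_center_of_unique_noncommutator hG)
  obtain ⟨g, hg, hg1⟩ := exists_ne_one_mem_commutatorSet hnonabelian
  exact ⟨finiteMulSupportSubgroup ℕ G ⧸ evenIndicatorSubgroup ℕ htt, inferInstance,
    infinite_quotient_evenIndicatorSubgroup htt hg1 ((hG g).mp hg),
    ⟨Nat.card G, Nat.card_pos, pow_natCard_eq_one_quotient _⟩,
    existsUnique_notMem_commutatorSet htt hG⟩
end
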